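/- arXiv:2501.02604 — 5 statements merged into one kernel-verified Lean document; each statement's English description precedes it below -/
import Mathlib

section
/- The h-shuffle is surjective: for every injective a : ℕ → ℕ and every hash h : 2^{<ω} → Bool, the map f : 2^ω → 2^ω defined by f(x)(i) = x(a(i)) XOR h(x↾a(i)) is a surjection. (Explicitly, for each y ∈ 2^ω the real x defined by the recursion x(m) = y(i) XOR h(x↾m) if m = a(i) for some i, and x(m) = 0 otherwise, satisfies f(x) = y.) -/
/-- The length-`n` prefix of a real `x : ℕ → Bool`, as a finite binary string. -/
def pre (x : ℕ → Bool) (n : ℕ) : List Bool := (List.range n).map x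

/-- The `h`-shuffle determined by the enumeration `a` and the hash `h`:
`f(x)(i) = x(a i) XOR h(x↾(a i))`. -/
def shuffle (a : ℕ → ℕ) (h : List Bool → Bool) (x : ℕ → Bool) : ℕ → Bool :=
  fun i => xor (x (a i)) (h (pre x (a i)))

open Classical in
noncomputable def mkx (a : ℕ → ℕ) (h : List Bool → Bool) (y : ℕ → Bool) : ℕ → Bool
  | m =>
    if hm : ∃ i, a i = m then
      xor (y hm.choose) (h ((List.range m).attach.map fun k => mkx a h y k.1))
    else false
  termination_by m => m
  decreasing_by exact List.mem_range.mp k.2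

lemma pre_mkx (a : ℕ → ℕ) (h : List Bool → Bool) (y : ℕ → Bool) (m : ℕ) :
    pre (mkx a h y) m = (List.range m).attach.map fun k => mkx a h y k.1 := by
  simp [pre, List.attach_map_val]

open Classical in
lemma mkx_eq (a : ℕ → ℕ) (h : List Bool → Bool) (y : ℕ → Bool) (m : ℕ) :
    mkx a h y m =
      if hm : ∃ i, a i = m then xor (y hm.choose) (h (pre (mkx a h y) m))
      else false := by
  rw [mkx, pre_mkx]

/-- The `h`-shuffle is surjective; explicitly, for each `y` there is an `x`
satisfying the recursion `x(m) = y(i) XOR h(x↾m)` if `m = a i`, and `x(m) = 0`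
otherwise, and this `x` satisfies `f(x) = y`. -/
theorem shuffle_surjective (a : ℕ → ℕ) (ha : Function.Injective a)
    (h : List Bool → Bool) :
    Function.Surjective (shuffle a h) ∧
      ∀ y : ℕ → Bool, ∃ x : ℕ → Bool,
        (∀ i, x (a i) = xor (y i) (h (pre x (a i)))) ∧
        (∀ m, m ∉ Set.range a → x m = false) ∧
        shuffle a h x = y := by
  have main : ∀ y : ℕ → Bool, ∃ x : ℕ → Bool,
      (∀ i, x (a i) = xor (y i) (h (pre x (a i)))) ∧
      (∀ m, m ∉ Set.range a → x m = false) ∧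
      shuffle a h x = y := by
    intro y
    refine ⟨mkx a h y, ?_, ?_, ?_⟩
    · intro i
      have hm : ∃ j, a j = a i := ⟨i, rfl⟩
      have hch : hm.choose = i := ha hm.choose_spec
      rw [mkx_eq, dif_pos hm, hch]
    · intro m hm
      rw [mkx_eq, dif_neg]
      rintro ⟨i, rfl⟩
      exact hm ⟨i, rfl⟩
    · funext i
      have hm : ∃ j, a j = a i := ⟨i, rfl⟩
      have hch : hm.choose = i := ha hm.choose_spec
      simp only [shuffle]
      rw [mkx_eq, dif_pos hm, hch, Bool.xor_assoc, Bool.xor_self, Bool.xor_false]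
  exact ⟨fun y => (main y).elim fun x hx => ⟨x, hx.2.2⟩, main⟩
end

section
/- If the complement ℕ \ range(a) is infinite, then the h-shuffle f is strongly nowhere injective in the topological sense: for every y ∈ 2^ω the fiber f⁻¹({y}) is a nonempty perfect subset of Cantor space (a nonempty closed set with no isolated points). -/
/-!
The bit of a fiber point `x` of `shuffle a h` over `y` at a position `n = a i` is forced by `y i`
and `x↾n`, while its bits off `range a` are free. So by recursion on prefixes, every `b : ℕ → Bool`
determines a point of the fiber that agrees with `b` off `range a`. Flipping the bit of a fiber
point `x` at some position `m ∉ range a` beyond `n` gives a different fiber point that agrees with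
`x` below `n`. The fiber is closed because each coordinate of `shuffle a h` depends on finitely many
coordinates.
-/

open Function PiNat

lemma PiNat.accPt_of_forall_exists_ne_mem_inter_cylinder {E : ℕ → Type*}
    [∀ n, TopologicalSpace (E n)] [∀ n, DiscreteTopology (E n)] {S : Set (∀ n, E n)}
    {x : ∀ n, E n} (hS : ∀ n, ∃ z ∈ S ∩ cylinder x n, z ≠ x) : AccPt x (Filter.principal S) := by
  rw [accPt_iff_nhds]
  intro U hU
  obtain ⟨_, ⟨w, n, rfl⟩, hxw, hwU⟩ := (isTopologicalBasis_cylinders E).mem_nhds_iff.1 hU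
  obtain ⟨z, ⟨hzS, hzx⟩, hne⟩ := hS n
  rw [mem_cylinder_iff_eq] at hxw
  exact ⟨z, ⟨hwU (hxw ▸ hzx), hzS⟩, hne⟩

lemma pre_succ (x : ℕ → Bool) (n : ℕ) : pre x (n + 1) = pre x n ++ [x n] := by
  simp [pre, List.range_succ]

lemma pre_congr {x z : ℕ → Bool} {n : ℕ} (hxz : ∀ k < n, x k = z k) : pre x n = pre z n :=
  List.map_congr_left fun k hk => hxz k (List.mem_range.1 hk)

lemma pre_eq_ofFn (x : ℕ → Bool) (n : ℕ) : pre x n = List.ofFn fun k : Fin n => x k := by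
  rw [pre, ← List.map_coe_finRange_eq_range, List.map_map, List.ofFn_eq_map]
  rfl

lemma continuous_comp_pre {α : Type*} [TopologicalSpace α] (g : List Bool → α) (n : ℕ) :
    Continuous fun x => g (pre x n) := by
  simp only [pre_eq_ofFn]
  exact (continuous_of_discreteTopology (f := fun v : Fin n → Bool => g (List.ofFn v))).comp
    (continuous_pi fun k => continuous_apply (k : ℕ))

lemma continuous_shuffle (a : ℕ → ℕ) (h : List Bool → Bool) : Continuous (shuffle a h) :=
  continuous_pi fun i =>
    (continuous_of_discreteTopology (f := fun p : Bool × Bool => xor p.1 p.2)).comp₂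
      (continuous_apply (a i)) (continuous_comp_pre h (a i))

section PrefixRec

variable (F : ℕ → List Bool → Bool)

def prefixRecList : ℕ → List Bool
  | 0 => []
  | n + 1 => prefixRecList n ++ [F n (prefixRecList n)]

def prefixRec (n : ℕ) : Bool := F n (prefixRecList F n)

lemma pre_prefixRec (n : ℕ) : pre (prefixRec F) n = prefixRecList F n := by
  induction n with
  | zero => rfl
  | succ n ih => rw [pre_succ, ih]; rfl

lemma prefixRec_apply (n : ℕ) : prefixRec F n = F n (pre (prefixRec F) n) := by
  rw [pre_prefixRec]
  rfl

lemma prefixRec_eq_of_lt {x : ℕ → Bool} {m : ℕ} (hx : ∀ n < m, x n = F n (pre x n)) :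
    ∀ n < m, prefixRec F n = x n := by
  intro n
  induction n using Nat.strong_induction_on with
  | _ n ih =>
    intro hn
    rw [prefixRec_apply, hx n hn, pre_congr fun k hk => ih k hk (hk.trans hn)]

end PrefixRec

section Fiber

open scoped Classical in
noncomputable def fiberStep (a : ℕ → ℕ) (h : List Bool → Bool) (y b : ℕ → Bool) (n : ℕ)
    (l : List Bool) : Bool :=
  if hn : n ∈ Set.range a then xor (y hn.choose) (h l) else b n

noncomputable def fiberPoint (a : ℕ → ℕ) (h : List Bool → Bool) (y b : ℕ → Bool) : ℕ → Bool :=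
  prefixRec (fiberStep a h y b)

variable {a : ℕ → ℕ} {h : List Bool → Bool} {x y : ℕ → Bool}

lemma shuffle_fiberPoint (ha : Injective a) (y b : ℕ → Bool) :
    shuffle a h (fiberPoint a h y b) = y := by
  funext i
  have hi : a i ∈ Set.range a := ⟨i, rfl⟩
  rw [shuffle, fiberPoint, prefixRec_apply, fiberStep, dif_pos hi, ha hi.choose_spec,
    Bool.xor_assoc, Bool.xor_self, Bool.xor_false]

lemma fiberPoint_apply_of_notMem {n : ℕ} (hn : n ∉ Set.range a) (b : ℕ → Bool) :
    fiberPoint a h y b n = b n := by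
  rw [fiberPoint, prefixRec_apply, fiberStep, dif_neg hn]

lemma fiberStep_of_shuffle_eq (hx : shuffle a h x = y) (n : ℕ) :
    x n = fiberStep a h y x n (pre x n) := by
  unfold fiberStep
  split_ifs with hn
  · rw [← hx, shuffle, hn.choose_spec, Bool.xor_assoc, Bool.xor_self, Bool.xor_false]
  · rfl

lemma fiberPoint_eq_of_lt (hx : shuffle a h x = y) {b : ℕ → Bool} {m : ℕ}
    (hb : ∀ k < m, b k = x k) : ∀ k < m, fiberPoint a h y b k = x k := by
  refine prefixRec_eq_of_lt _ fun n hn => ?_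
  rw [fiberStep_of_shuffle_eq hx n]
  simp only [fiberStep, hb n hn]

lemma exists_ne_mem_fiber_inter_cylinder (ha : Injective a) (hinf : (Set.range a)ᶜ.Infinite)
    (hx : shuffle a h x = y) (n : ℕ) :
    ∃ z ∈ shuffle a h ⁻¹' {y} ∩ cylinder x n, z ≠ x := by
  obtain ⟨m, hm, hnm⟩ := hinf.exists_gt n
  have hb : ∀ k < m, update x m (!x m) k = x k := fun k hk => update_of_ne hk.ne _ _
  refine ⟨fiberPoint a h y (update x m (!x m)), ⟨shuffle_fiberPoint ha y _,
    mem_cylinder_iff.2 fun k hk => fiberPoint_eq_of_lt hx hb k (hk.trans hnm)⟩, fun hz => ?_⟩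
  have hzm := congrFun hz m
  rw [fiberPoint_apply_of_notMem hm, update_self] at hzm
  exact Bool.not_ne_self (x m) hzm

end Fiber

/-- If `ℕ \ range a` is infinite, every fiber of the `h`-shuffle is a nonempty
perfect subset of Cantor space. -/
theorem shuffle_fiber_perfect (a : ℕ → ℕ) (ha : Function.Injective a)
    (h : List Bool → Bool) (hinf : (Set.range a)ᶜ.Infinite) :
    ∀ y : ℕ → Bool,
      (shuffle a h ⁻¹' {y}).Nonempty ∧ Perfect (shuffle a h ⁻¹' {y}) := by
  intro y
  refine ⟨⟨fiberPoint a h y y, shuffle_fiberPoint ha y y⟩,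
    isClosed_singleton.preimage (continuous_shuffle a h), fun x hx => ?_⟩
  exact accPt_of_forall_exists_ne_mem_inter_cylinder
    (exists_ne_mem_fiber_inter_cylinder ha hinf hx)
end

section
/- Siblings of the inseparability hash-shuffle yield separating sets: let B, C ⊆ ℕ be disjoint, let ⟨·,·⟩ : 2^{<ω} × ℕ → ℕ be injective with |σ| < ⟨σ,n⟩ for all σ, n, let i ↦ (σ_i, n_i) be a bijection from ℕ onto 2^{<ω} × (B ∪ C), set a(i) = ⟨σ_i, n_i⟩, and define the hash h by: h(τ) = true if |τ| = ⟨σ_i, n_i⟩ for some i with σ_i a prefix of τ and n_i ∈ B, and h(τ) = false otherwise. Let f be the h-shuffle. If x ≠ z and f(x) = f(z), and σ = x↾(k+1) where k is the least position with x(k) ≠ z(k), then for every n ∈ B ∪ C: x(⟨σ,n⟩) ≠ z(⟨σ,n⟩) if and only if n ∈ B. In particular {n : x(⟨σ,n⟩) ≠ z(⟨σ,n⟩)} contains B and is disjoint from C, i.e. it is a (B,C)-separating set. -/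
/-- Siblings of the inseparability hash-shuffle yield `(B,C)`-separating sets:
with `B, C` disjoint, `pair` an injective pairing with `|σ| < ⟨σ,n⟩`,
`e` a bijection from `ℕ` onto `2^{<ω} × (B ∪ C)`, `a i = ⟨σ_i, n_i⟩`, and the
hash `h(τ) = true` iff `|τ| = ⟨σ_i,n_i⟩` for some `i` with `σ_i ⪯ τ` and
`n_i ∈ B`: if `x ≠ z` are siblings of the `h`-shuffle, `k` is the least
position where `x, z` differ and `σ = x↾(k+1)`, then for all `n ∈ B ∪ C` we
have `x(⟨σ,n⟩) ≠ z(⟨σ,n⟩) ↔ n ∈ B`; in particular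
`M = {n : x(⟨σ,n⟩) ≠ z(⟨σ,n⟩)}` contains `B` and is disjoint from `C`. -/
theorem inseparability_hash_siblings_separating
    (B C : Set ℕ) (hBC : Disjoint B C)
    (pair : List Bool → ℕ → ℕ)
    (hpairinj : Function.Injective fun q : List Bool × ℕ => pair q.1 q.2)
    (hpairlen : ∀ (σ : List Bool) (n : ℕ), σ.length < pair σ n)
    (e : ℕ → List Bool × ℕ)
    (heinj : Function.Injective e)
    (herange : Set.range e = {q : List Bool × ℕ | q.2 ∈ B ∪ C})
    (h : List Bool → Bool)
    (hh : ∀ τ : List Bool, h τ = true ↔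
      ∃ i, τ.length = pair (e i).1 (e i).2 ∧ (e i).1 <+: τ ∧ (e i).2 ∈ B)
    (x z : ℕ → Bool) (hxz : x ≠ z)
    (hsib : shuffle (fun i => pair (e i).1 (e i).2) h x
          = shuffle (fun i => pair (e i).1 (e i).2) h z)
    (k : ℕ) (hk : x k ≠ z k) (hkmin : ∀ j < k, x j = z j) :
    (∀ n ∈ B ∪ C,
      (x (pair (pre x (k + 1)) n) ≠ z (pair (pre x (k + 1)) n) ↔ n ∈ B)) ∧
    B ⊆ {n | x (pair (pre x (k + 1)) n) ≠ z (pair (pre x (k + 1)) n)} ∧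
    {n | x (pair (pre x (k + 1)) n) ≠ z (pair (pre x (k + 1)) n)} ∩ C = ∅ := by
  have hlen : ∀ (y : ℕ → Bool) (n : ℕ), (pre y n).length = n := by
    intro y n; simp [pre]
  have hmain : ∀ n ∈ B ∪ C,
      (x (pair (pre x (k + 1)) n) ≠ z (pair (pre x (k + 1)) n) ↔ n ∈ B) := by
    intro n hn
    obtain ⟨i, hei⟩ : ∃ i, e i = (pre x (k + 1), n) := by
      have : (pre x (k + 1), n) ∈ Set.range e := by rw [herange]; exact hn
      exact this
    set σ := pre x (k + 1) with hσdef
    set m := pair σ n with hmdef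
    have hkm : k + 1 ≤ m := by
      have := hpairlen σ n; rw [hlen] at this; exact this.le
    -- σ is a prefix of pre x m
    have hxpre : σ <+: pre x m := by
      have : σ = (pre x m).take (k + 1) := by
        simp [pre, hσdef, List.take_range, Nat.min_eq_left hkm, ← List.map_take]
      rw [this]; exact List.take_prefix _ _
    -- σ is not a prefix of pre z m
    have hnzpre : ¬ σ <+: pre z m := by
      intro hp
      have hklt : k < σ.length := by rw [hσdef, hlen]; omega
      have := hp.getElem hklt
      have hx' : σ[k]'hklt = x k := by simp [hσdef, pre]
      have hz' : (pre z m)[k]'(by rw [hlen]; omega) = z k := by simp [pre]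
      rw [hx', hz'] at this
      exact hk this
    -- the unique witness
    have huniq : ∀ j, (pre x m).length = pair (e j).1 (e j).2 → e j = (σ, n) := by
      intro j hj
      apply hpairinj
      show pair (e j).1 (e j).2 = pair σ n
      rw [← hj, hlen]
    have huniq' : ∀ j, (pre z m).length = pair (e j).1 (e j).2 → e j = (σ, n) := by
      intro j hj
      apply hpairinj
      show pair (e j).1 (e j).2 = pair σ n
      rw [← hj, hlen]
    have hzfalse : h (pre z m) = false := by
      cases hc : h (pre z m) with
      | false => rfl
      | true =>
        obtain ⟨j, hj1, hj2, hj3⟩ := (hh _).mp hc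
        have hej := huniq' j hj1
        rw [hej] at hj2
        exact absurd hj2 hnzpre
    have hm := congrFun hsib i
    simp only [shuffle, hei] at hm
    rw [hzfalse] at hm
    by_cases hnB : n ∈ B
    · have hxtrue : h (pre x m) = true := by
        rw [hh]
        exact ⟨i, by rw [hlen, hei], by rw [hei]; exact hxpre, by rw [hei]; exact hnB⟩
      rw [hxtrue] at hm
      simp only [Bool.xor_true, Bool.xor_false] at hm
      constructor
      · intro _; exact hnB
      · intro _; rw [← hm]; simp [hmdef]
    · have hxfalse : h (pre x m) = false := by
        cases hc : h (pre x m) with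
        | false => rfl
        | true =>
          obtain ⟨j, hj1, hj2, hj3⟩ := (hh _).mp hc
          have hej := huniq j hj1
          rw [hej] at hj3
          exact absurd hj3 hnB
      rw [hxfalse] at hm
      simp only [Bool.xor_false] at hm
      simp [hmdef, hm, hnB]
  refine ⟨hmain, ?_, ?_⟩
  · intro n hnB
    exact (hmain n (Or.inl hnB)).mpr hnB
  · ext n
    simp only [Set.mem_inter_iff, Set.mem_setOf_eq, Set.mem_empty_iff_false, iff_false,
      not_and]
    intro hne hnC
    exact Set.disjoint_left.mp hBC ((hmain n (Or.inr hnC)).mp hne) hnC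
end

section
/- Siblings of the universal-predicate hash-shuffle yield total extensions of the universal predicate: let K = {n : the universal machine halts on input n with program code n, i.e. ((Nat.Partrec.Code.ofNat n).eval n) is defined}, and for n ∈ K let b(n) ∈ Bool be the Boolean value of the output (true iff the output is nonzero). Let ⟨·,·⟩ : 2^{<ω} × ℕ → ℕ be injective with |σ| < ⟨σ,n⟩, let i ↦ (σ_i, n_i) be a bijection from ℕ onto 2^{<ω} × K, set a(i) = ⟨σ_i, n_i⟩, and define the hash h by: h(τ) = b(n_i) if |τ| = ⟨σ_i, n_i⟩ for some i with σ_i a prefix of τ, and h(τ) = false otherwise. Let f be the h-shuffle. If x ≠ z and f(x) = f(z), and σ = x↾(k+1) where k is the least position with x(k) ≠ z(k), then the function ψ : ℕ → Bool defined by ψ(n) = x(⟨σ,n⟩) XOR z(⟨σ,n⟩) satisfies ψ(n) = b(n) for every n ∈ K; that is, ψ is a total Boolean extension of the universal predicate. -/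
/-- The halting set `K = {n : φ_n(n)↓}` for the universal enumeration of
partial computable functions. -/
def K : Set ℕ := {n | ((Denumerable.ofNat Nat.Partrec.Code n).eval n).Dom}

-- The Boolean value of the universal predicate: for `n ∈ K`, `bval n` is
-- `true` iff the output of `φ_n(n)` is nonzero (and `false` off `K`).
open Classical in
noncomputable def bval (n : ℕ) : Bool :=
  if hn : ((Denumerable.ofNat Nat.Partrec.Code n).eval n).Dom then
    decide ((((Denumerable.ofNat Nat.Partrec.Code n).eval n).get hn) ≠ 0)
  else false

lemma pre_length (x : ℕ → Bool) (n : ℕ) : (pre x n).length = n := by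
  simp [pre]

lemma pre_getElem (x : ℕ → Bool) {n i : ℕ} (h : i < n) :
    (pre x n)[i]'(by simpa [pre] using h) = x i := by
  simp [pre]

lemma pre_prefix (x : ℕ → Bool) {a b : ℕ} (h : a ≤ b) : pre x a <+: pre x b := by
  refine ⟨((List.range (b - a)).map (a + ·)).map x, ?_⟩
  rw [pre, pre, ← List.map_append, ← List.range_add, Nat.add_sub_cancel' h]

/-- Siblings of the universal-predicate hash-shuffle compute total Boolean
extensions of the universal predicate: with `pair` an injective pairing with
`|σ| < ⟨σ,n⟩`, `e` a bijection from `ℕ` onto `2^{<ω} × K`, `a i = ⟨σ_i,n_i⟩`,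
and hash `h(τ) = b(n_i)` if `|τ| = ⟨σ_i,n_i⟩` for some `i` with `σ_i ⪯ τ`
(`false` otherwise): if `x ≠ z` are siblings of the `h`-shuffle, `k` is the
least position where they differ and `σ = x↾(k+1)`, then
`ψ(n) := x(⟨σ,n⟩) XOR z(⟨σ,n⟩)` agrees with `b` on all of `K`. -/
theorem universal_hash_siblings_extend_universal_predicate
    (pair : List Bool → ℕ → ℕ)
    (hpairinj : Function.Injective fun q : List Bool × ℕ => pair q.1 q.2)
    (hpairlen : ∀ (σ : List Bool) (n : ℕ), σ.length < pair σ n)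
    (e : ℕ → List Bool × ℕ)
    (heinj : Function.Injective e)
    (herange : Set.range e = {q : List Bool × ℕ | q.2 ∈ K})
    (h : List Bool → Bool)
    (hh : ∀ τ : List Bool, h τ = true ↔
      ∃ i, τ.length = pair (e i).1 (e i).2 ∧ (e i).1 <+: τ ∧ bval (e i).2 = true)
    (x z : ℕ → Bool) (hxz : x ≠ z)
    (hsib : shuffle (fun i => pair (e i).1 (e i).2) h x
          = shuffle (fun i => pair (e i).1 (e i).2) h z)
    (k : ℕ) (hk : x k ≠ z k) (hkmin : ∀ j < k, x j = z j) :
    ∀ n ∈ K, xor (x (pair (pre x (k + 1)) n)) (z (pair (pre x (k + 1)) n)) = bval n := by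
  intro n hn
  have hσlen : (pre x (k+1)).length = k + 1 := pre_length x (k+1)
  obtain ⟨i, hi⟩ : ∃ i, e i = (pre x (k+1), n) := by
    have : (pre x (k+1), n) ∈ Set.range e := by rw [herange]; exact hn
    exact this
  set σ := pre x (k+1) with hσ
  set m := pair σ n with hm
  have hkm : k + 1 ≤ m := by have := hpairlen σ n; omega
  have hai : pair (e i).1 (e i).2 = m := by rw [hi]
  have hxpre : σ <+: pre x m := pre_prefix x hkm
  have hlenx : (pre x m).length = m := pre_length x m
  have hlenz : (pre z m).length = m := pre_length z m
  have hhx : h (pre x m) = bval n := by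
    cases hb : bval n with
    | true =>
      exact (hh _).2 ⟨i, by rw [hai, hlenx], by rw [hi]; exact hxpre, by rw [hi]; exact hb⟩
    | false =>
      by_contra hc
      have hc' : h (pre x m) = true := by
        revert hc; cases h (pre x m) <;> simp [hb]
      obtain ⟨j, hj1, hj2, hj3⟩ := (hh _).1 hc'
      have hej : e j = (σ, n) := hpairinj (by
        show pair (e j).1 (e j).2 = pair σ n
        rw [← hj1, hlenx, hm])
      rw [hej] at hj3
      simp only at hj3
      rw [hj3] at hb
      exact absurd hb (by simp)
  have hhz : h (pre z m) = false := by
    by_contra hc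
    have hc' : h (pre z m) = true := by
      revert hc; cases h (pre z m) <;> simp
    obtain ⟨j, hj1, hj2, hj3⟩ := (hh _).1 hc'
    have hej : e j = (σ, n) := hpairinj (by
      show pair (e j).1 (e j).2 = pair σ n
      rw [← hj1, hlenz, hm])
    rw [hej] at hj2
    have hp : σ <+: pre z m := hj2
    have hkm' : k < m := by omega
    have hkσ : k < σ.length := by rw [hσlen]; omega
    have hge := hp.getElem hkσ
    have h1 : σ[k]'hkσ = x k := pre_getElem x (by omega)
    have h2 : (pre z m)[k]'(by rw [hlenz]; omega) = z k := pre_getElem z hkm'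
    rw [h1, h2] at hge
    exact hk hge
  have hfi := congrFun hsib i
  simp only [shuffle, hai] at hfi
  rw [hhx, hhz] at hfi
  cases hb : bval n <;> cases hx2 : x m <;> cases hz2 : z m <;> simp_all
end

section
/- Recovery of the enumerated set from a length-bounded representation: let a : ℕ → ℕ be injective, let ĝ : 2^{<ω} → 2^{<ω} be monotone (σ ⪯ τ implies ĝ(σ) ⪯ ĝ(τ)), and let y ∈ 2^ω be such that the lengths |ĝ(y↾i)| are unbounded in i. Suppose there is j₀ such that |ĝ(y↾i)| ≤ a(i+1) for all i > j₀. Then for every n, letting t_n be the least t > j₀ with |ĝ(y↾t)| > n (which exists), we have: n ∈ range(a) if and only if n ∈ {a(0), a(1), …, a(t_n)}. -/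
lemma pre_prefix_pre (x : ℕ → Bool) {m n : ℕ} (h : m ≤ n) : pre x m <+: pre x n := by
  have : pre x m = (pre x n).take m := by
    rw [pre, pre, ← List.map_take, List.take_range, Nat.min_eq_left h]
  exact this ▸ List.take_prefix _ _

lemma monotone_length_apply_pre {g : List Bool → List Bool}
    (hmono : ∀ σ τ : List Bool, σ <+: τ → g σ <+: g τ) (y : ℕ → Bool) :
    Monotone fun i => (g (pre y i)).length :=
  fun _ _ h => (hmono _ _ (pre_prefix_pre y h)).length_le

lemma Monotone.exists_gt_lt_apply {f : ℕ → ℕ} (hf : Monotone f) (hunb : ∀ N, ∃ i, N < f i)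
    (j₀ n : ℕ) : ∃ t, j₀ < t ∧ n < f t := by
  obtain ⟨i, hi⟩ := hunb n
  exact ⟨max i (j₀ + 1), by omega, hi.trans_le (hf (le_max_left _ _))⟩

/-- Once `f` exceeds `n` at a stage `t > j₀`, the bound `f i ≤ a (i + 1)` forbids `a` from
taking the value `n` after `t`, so `n` is enumerated by stage `t` or never. -/
lemma mem_range_iff_exists_le_of_lt_apply {a f : ℕ → ℕ} {j₀ t n : ℕ} (hf : Monotone f)
    (hbd : ∀ i > j₀, f i ≤ a (i + 1)) (ht : j₀ < t) (hn : n < f t) :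
    n ∈ Set.range a ↔ ∃ i ≤ t, a i = n := by
  refine ⟨?_, fun ⟨i, _, hi⟩ => ⟨i, hi⟩⟩
  rintro ⟨k, rfl⟩
  refine ⟨k, ?_, rfl⟩
  by_contra! hk
  obtain ⟨i, rfl⟩ : ∃ i, k = i + 1 := ⟨k - 1, by omega⟩
  have : f t ≤ a (i + 1) := (hf (by omega)).trans (hbd i (by omega))
  omega

theorem recover_range_from_bounded_representation_general
    (a : ℕ → ℕ)
    (g : List Bool → List Bool)
    (hmono : ∀ σ τ : List Bool, σ <+: τ → g σ <+: g τ)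
    (y : ℕ → Bool)
    (hunb : ∀ N : ℕ, ∃ i, N < (g (pre y i)).length)
    (j₀ : ℕ) (hbd : ∀ i > j₀, (g (pre y i)).length ≤ a (i + 1)) :
    ∀ n : ℕ, ∃ t,
      (j₀ < t ∧ n < (g (pre y t)).length ∧
        ∀ s, j₀ < s → n < (g (pre y s)).length → t ≤ s) ∧
      (n ∈ Set.range a ↔ ∃ i ≤ t, a i = n) := by
  intro n
  have hf := monotone_length_apply_pre hmono y
  classical
  have hex := hf.exists_gt_lt_apply hunb j₀ n
  obtain ⟨ht, hn⟩ := Nat.find_spec hex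
  exact ⟨Nat.find hex, ⟨ht, hn, fun s hs hns => Nat.find_min' hex ⟨hs, hns⟩⟩,
    mem_range_iff_exists_le_of_lt_apply hf hbd ht hn⟩

/-- Recovery of the enumerated set from a length-bounded representation:
if `a` is injective, `g` is monotone for the prefix order, the lengths
`|g(y↾i)|` are unbounded, and `|g(y↾i)| ≤ a(i+1)` for all `i > j₀`, then for
each `n`, letting `t_n` be the least `t > j₀` with `|g(y↾t)| > n` (which
exists), we have `n ∈ range a ↔ n ∈ {a 0, …, a t_n}`. -/
theorem recover_range_from_bounded_representation
    (a : ℕ → ℕ) (ha : Function.Injective a)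
    (g : List Bool → List Bool)
    (hmono : ∀ σ τ : List Bool, σ <+: τ → g σ <+: g τ)
    (y : ℕ → Bool)
    (hunb : ∀ N : ℕ, ∃ i, N < (g (pre y i)).length)
    (j₀ : ℕ) (hbd : ∀ i > j₀, (g (pre y i)).length ≤ a (i + 1)) :
    ∀ n : ℕ, ∃ t,
      (j₀ < t ∧ n < (g (pre y t)).length ∧
        ∀ s, j₀ < s → n < (g (pre y s)).length → t ≤ s) ∧
      (n ∈ Set.range a ↔ ∃ i ≤ t, a i = n) :=
  recover_range_from_bounded_representation_general a g hmono y hunb j₀ hbd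
end
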